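/- arXiv:2211.03448 — 2 statements merged into one kernel-verified Lean document; each statement's English description precedes it below -/
import Mathlib

section
/- Fix α ∈ (0,2) and set d_k = ⌊2^{2αk/(2−α)}⌋. Let (Ω, F, P) be a probability space carrying a triangular array (X_k(j))_{k∈ℕ, 1≤j≤2d_k} such that for each k the variables X_k(1), …, X_k(2d_k) are i.i.d. SαS(k^{−1/α}), and the rows for distinct k are mutually independent. Define X̂_k(j) = X_k(j)·1[|X_k(j)| ≥ 2^{k²}]. Then n^{−1/α} · Σ_{k=⌊(1/α−1/2)log₂ n⌋+1}^{⌊(1/α)log₂ n⌋} Σ_{j=1}^{n} ( X̂_k(j) − X̂_k(j+d_k) ) → 0 P-almost surely (in particular, in probability) as n → ∞. -/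
open MeasureTheory ProbabilityTheory Filter Topology

/-- `X` is a symmetric `α`-stable random variable with dispersion `σ` on `(Ω, P)`:
its characteristic function is `θ ↦ exp (-σ^α |θ|^α)`. -/
def IsSaS {Ω : Type*} [MeasurableSpace Ω] (P : Measure Ω) (α σ : ℝ) (X : Ω → ℝ) : Prop :=
  ∀ θ : ℝ, ∫ ω, Complex.exp ((θ * X ω : ℝ) * Complex.I) ∂P
    = Complex.exp (-(σ ^ α * |θ| ^ α) : ℝ)

/-- `d_k = ⌊2^(2αk/(2-α))⌋`. -/
noncomputable def dSeq (α : ℝ) (k : ℕ) : ℕ := ⌊(2 : ℝ) ^ (2 * α * k / (2 - α))⌋₊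

/-!
The truncation inequality bounds `P(|X_k(j)| ≥ 2^{k²})` by a constant times `2^{-αk²}`, while
row `k` has `2 d_k ≤ 2 · 2^{2αk/(2-α)}` entries, so the probability that some entry of row `k`
is large is summable in `k`. By Borel–Cantelli, almost surely no entry of any row `k ≥ K` is
large. For `k` above the lower scale `⌊(1/α - 1/2) log₂ n⌋` we have `n ≤ d_k`, so both indices
`j` and `j + d_k` of the sum lie in row `k`; once the lower scale exceeds `K` the sum is `0`.
-/

namespace IsSaS

variable {Ω : Type*} [MeasurableSpace Ω] {P : Measure Ω} {α σ : ℝ} {X : Ω → ℝ}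

lemma charFun_map (hX : AEMeasurable X P) (h : IsSaS P α σ X) (t : ℝ) :
    charFun (P.map X) t = (Real.exp (-(σ ^ α * |t| ^ α)) : ℂ) := by
  rw [charFun_apply_real, integral_map hX (by fun_prop), Complex.ofReal_exp, ← h t]
  push_cast
  rfl

lemma measureReal_abs_gt_le [IsProbabilityMeasure P] (hX : AEMeasurable X P)
    (h : IsSaS P α σ X) (hα : 0 ≤ α) (hσ : 0 ≤ σ) {r : ℝ} (hr : 0 < r) :
    P.real {ω | r < |X ω|} ≤ 2 * σ ^ α * (2 / r) ^ α := by
  have := Measure.isProbabilityMeasure_map hX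
  have hbound : ∀ t ∈ Set.uIoc (-2 * r⁻¹) (2 * r⁻¹),
      ‖1 - charFun (P.map X) t‖ ≤ σ ^ α * (2 / r) ^ α := by
    intro t ht
    have ht' : |t| ≤ 2 / r := by
      rw [Set.uIoc_of_le (by nlinarith [inv_pos.mpr hr])] at ht
      rw [abs_le, div_eq_mul_inv]
      exact ⟨by linarith [ht.1], ht.2⟩
    have hc : σ ^ α * |t| ^ α ≤ σ ^ α * (2 / r) ^ α := by gcongr
    rw [charFun_map hX h, ← Complex.ofReal_one, ← Complex.ofReal_sub, Complex.norm_real,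
      Real.norm_of_nonneg (sub_nonneg.mpr (Real.exp_le_one_iff.mpr (neg_nonpos.mpr (by positivity))))]
    linarith [Real.add_one_le_exp (-(σ ^ α * |t| ^ α))]
  calc P.real {ω | r < |X ω|} = (P.map X).real {x | r < |x|} :=
        (map_measureReal_apply_of_aemeasurable hX (measurableSet_lt measurable_const
          measurable_abs)).symm
    _ ≤ 2⁻¹ * r * ‖∫ t in (-2 * r⁻¹)..(2 * r⁻¹), 1 - charFun (P.map X) t‖ :=
        measureReal_abs_gt_le_integral_charFun hr
    _ ≤ 2⁻¹ * r * (σ ^ α * (2 / r) ^ α * |2 * r⁻¹ - -2 * r⁻¹|) := by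
        gcongr
        exact intervalIntegral.norm_integral_le_of_norm_le_const hbound
    _ = 2 * σ ^ α * (2 / r) ^ α := by
        rw [show 2 * r⁻¹ - -2 * r⁻¹ = 4 / r by ring, abs_of_pos (by positivity)]
        field_simp
        ring

lemma measureReal_abs_ge_le [IsProbabilityMeasure P] (hX : AEMeasurable X P)
    (h : IsSaS P α σ X) (hα : 0 ≤ α) (hσ : 0 ≤ σ) {l : ℝ} (hl : 0 < l) :
    P.real {ω | l ≤ |X ω|} ≤ 2 * σ ^ α * (4 / l) ^ α :=
  calc P.real {ω | l ≤ |X ω|} ≤ P.real {ω | l / 2 < |X ω|} :=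
        measureReal_mono fun ω (hω : l ≤ |X ω|) => show l / 2 < |X ω| by linarith
    _ ≤ 2 * σ ^ α * (2 / (l / 2)) ^ α := h.measureReal_abs_gt_le hX hα hσ (by positivity)
    _ = 2 * σ ^ α * (4 / l) ^ α := by ring_nf

end IsSaS

lemma summable_two_rpow_quadratic {a b c : ℝ} (hc : 0 < c) :
    Summable fun k : ℕ => (2 : ℝ) ^ (a + b * k - c * k ^ 2) := by
  refine Summable.of_norm_bounded_eventually_nat summable_geometric_two ?_
  filter_upwards [eventually_ge_atTop ⌈(|a| + |b| + 1) / c⌉₊, eventually_ge_atTop 1]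
    with k hkc hk1
  have hk : (|a| + |b| + 1) / c ≤ k := Nat.ceil_le.mp hkc
  have hk1' : (1 : ℝ) ≤ k := by exact_mod_cast hk1
  have hexp : a + b * k - c * k ^ 2 ≤ -k := by
    have hquad : (|a| + |b| + 1) * k ≤ c * k ^ 2 := by
      rw [div_le_iff₀ hc] at hk
      nlinarith
    have ha : a ≤ |a| * k := (le_abs_self a).trans (le_mul_of_one_le_right (abs_nonneg a) hk1')
    have hb : b * k ≤ |b| * k := by gcongr; exact le_abs_self b
    linarith
  rw [Real.norm_of_nonneg (by positivity), one_div, inv_pow, ← Real.rpow_natCast (2 : ℝ) k,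
    ← Real.rpow_neg zero_le_two]
  exact Real.rpow_le_rpow_of_exponent_le one_le_two hexp

section BorelCantelli
variable {Ω : Type*} [MeasurableSpace Ω] {P : Measure Ω} [IsFiniteMeasure P]

lemma ae_eventually_forall_abs_lt_of_summable {Y : ℕ → ℕ → Ω → ℝ} {l b : ℕ → ℝ} {m : ℕ → ℕ}
    (hb : Summable fun k => (m k : ℝ) * b k)
    (htail : ∀ᶠ k in atTop, ∀ j ∈ Finset.Icc 1 (m k), P.real {ω | l k ≤ |Y k j ω|} ≤ b k) :
    ∀ᵐ ω ∂P, ∀ᶠ k in atTop, ∀ j ∈ Finset.Icc 1 (m k), |Y k j ω| < l k := by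
  set s : ℕ → Set Ω := fun k => ⋃ j ∈ Finset.Icc 1 (m k), {ω | l k ≤ |Y k j ω|}
  have hs : Summable fun k => P.real (s k) := by
    refine Summable.of_norm_bounded_eventually_nat hb ?_
    filter_upwards [htail] with k hk
    calc ‖P.real (s k)‖ = P.real (s k) := Real.norm_of_nonneg measureReal_nonneg
      _ ≤ ∑ j ∈ Finset.Icc 1 (m k), P.real {ω | l k ≤ |Y k j ω|} :=
          measureReal_biUnion_finset_le _ _
      _ ≤ ∑ j ∈ Finset.Icc 1 (m k), b k := Finset.sum_le_sum hk
      _ = m k * b k := by simp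
  have hs' : ∑' k, P (s k) ≠ ⊤ := by
    convert hs.tsum_ofReal_ne_top using 3
    exact (ofReal_measureReal (measure_ne_top P _)).symm
  filter_upwards [ae_eventually_notMem hs'] with ω hω
  filter_upwards [hω] with k hk j hj
  by_contra! hle
  exact hk (Set.mem_biUnion hj hle)

end BorelCantelli

lemma natCast_dSeq_le (α : ℝ) (k : ℕ) : (dSeq α k : ℝ) ≤ 2 ^ (2 * α * k / (2 - α)) :=
  Nat.floor_le (by positivity)

lemma le_dSeq {α : ℝ} (hα : α ∈ Set.Ioo (0 : ℝ) 2) {n k : ℕ}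
    (hnk : (1 / α - 1 / 2) * Real.logb 2 n ≤ k) : n ≤ dSeq α k := by
  obtain ⟨hα0, hα2⟩ := hα
  rcases Nat.eq_zero_or_pos n with rfl | hn
  · exact Nat.zero_le _
  have hlog : Real.logb 2 n ≤ 2 * α * k / (2 - α) := by
    rw [le_div_iff₀ (by linarith)]
    rw [show 1 / α - 1 / 2 = (2 - α) / (2 * α) by field_simp, div_mul_eq_mul_div,
      div_le_iff₀ (by positivity)] at hnk
    linarith
  refine Nat.le_floor ?_
  calc (n : ℝ) = 2 ^ Real.logb 2 n := (Real.rpow_logb two_pos (by norm_num) (by positivity)).symm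
    _ ≤ 2 ^ (2 * α * k / (2 - α)) := Real.rpow_le_rpow_of_exponent_le one_le_two hlog

lemma four_div_two_pow_sq_rpow (α : ℝ) (k : ℕ) :
    ((4 : ℝ) / 2 ^ (k ^ 2)) ^ α = 2 ^ (2 * α - α * k ^ 2) := by
  rw [show (4 : ℝ) / 2 ^ (k ^ 2) = 2 ^ ((2 : ℝ) - (k : ℝ) ^ 2) by
    rw [Real.rpow_sub two_pos]; norm_cast, ← Real.rpow_mul zero_le_two]
  ring_nf

lemma ae_eventually_forall_abs_lt_two_pow_sq {Ω : Type*} [MeasurableSpace Ω] (P : Measure Ω)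
    [IsProbabilityMeasure P] {α : ℝ} (hα : α ∈ Set.Ioo (0 : ℝ) 2) {X : ℕ → ℕ → Ω → ℝ}
    (hmeas : ∀ k j, Measurable (X k j))
    (hSaS : ∀ k, 1 ≤ k → ∀ j, 1 ≤ j → j ≤ 2 * dSeq α k →
        IsSaS P α ((k : ℝ) ^ (-(1 / α))) (X k j)) :
    ∀ᵐ ω ∂P, ∀ᶠ k in atTop, ∀ j ∈ Finset.Icc 1 (2 * dSeq α k), |X k j ω| < 2 ^ (k ^ 2) := by
  obtain ⟨hα0, hα2⟩ := hα
  refine ae_eventually_forall_abs_lt_of_summable (b := fun k => 2 * ((4 : ℝ) / 2 ^ (k ^ 2)) ^ α)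
    ?_ ?_
  · refine Summable.of_nonneg_of_le (fun k => by positivity) (fun k => ?_)
      ((summable_two_rpow_quadratic (a := 2 * α) (b := 2 * α / (2 - α)) hα0).mul_left 4)
    rw [four_div_two_pow_sq_rpow, show 2 * α + 2 * α / (2 - α) * k - α * k ^ 2
      = 2 * α * k / (2 - α) + (2 * α - α * k ^ 2) by ring, Real.rpow_add two_pos]
    push_cast
    nlinarith [natCast_dSeq_le α k, Real.rpow_pos_of_pos two_pos (2 * α - α * (k : ℝ) ^ 2)]
  · filter_upwards [eventually_ge_atTop 1] with k hk j hj
    obtain ⟨hj1, hj2⟩ := Finset.mem_Icc.mp hj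
    have hσ : ((k : ℝ) ^ (-(1 / α))) ^ α ≤ 1 := by
      rw [← Real.rpow_mul k.cast_nonneg, show -(1 / α) * α = -1 by field_simp, Real.rpow_neg_one]
      exact inv_le_one_of_one_le₀ (by exact_mod_cast hk)
    calc P.real {ω | 2 ^ (k ^ 2) ≤ |X k j ω|}
        ≤ 2 * ((k : ℝ) ^ (-(1 / α))) ^ α * (4 / 2 ^ (k ^ 2)) ^ α :=
          (hSaS k hk j hj1 hj2).measureReal_abs_ge_le (hmeas k j).aemeasurable hα0.le
            (by positivity) (by positivity)
      _ ≤ 2 * 1 * (4 / 2 ^ (k ^ 2)) ^ α := by gcongr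
      _ = 2 * ((4 : ℝ) / 2 ^ (k ^ 2)) ^ α := by ring

theorem middle_scale_large_truncation_vanishes_general
    {Ω : Type*} [MeasurableSpace Ω] (P : Measure Ω) [IsProbabilityMeasure P]
    (α : ℝ) (hα : α ∈ Set.Ioo (0 : ℝ) 2)
    (X : ℕ → ℕ → Ω → ℝ)
    (hmeas : ∀ k j, Measurable (X k j))
    (hSaS : ∀ k, 1 ≤ k → ∀ j, 1 ≤ j → j ≤ 2 * dSeq α k →
        IsSaS P α ((k : ℝ) ^ (-(1 / α))) (X k j)) :
    ∀ᵐ ω ∂P, Tendsto (fun n : ℕ =>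
        (n : ℝ) ^ (-(1 / α)) *
          ∑ k ∈ Finset.Icc (⌊(1 / α - 1 / 2) * Real.logb 2 n⌋₊ + 1)
              ⌊(1 / α) * Real.logb 2 n⌋₊,
            ∑ j ∈ Finset.Icc 1 n,
              ((if (2 : ℝ) ^ (k ^ 2) ≤ |X k j ω| then X k j ω else 0)
                - (if (2 : ℝ) ^ (k ^ 2) ≤ |X k (j + dSeq α k) ω|
                    then X k (j + dSeq α k) ω else 0)))
      atTop (𝓝 0) := by
  have hcoef : 0 < 1 / α - 1 / 2 := by
    linarith [one_div_lt_one_div_of_lt hα.1 hα.2]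
  have hlower : Tendsto (fun n : ℕ => ⌊(1 / α - 1 / 2) * Real.logb 2 n⌋₊) atTop atTop :=
    tendsto_nat_floor_atTop.comp <| (Real.tendsto_logb_atTop one_lt_two).comp
      tendsto_natCast_atTop_atTop |>.const_mul_atTop hcoef
  filter_upwards [ae_eventually_forall_abs_lt_two_pow_sq P hα hmeas hSaS] with ω hω
  obtain ⟨K, hK⟩ := eventually_atTop.mp hω
  refine tendsto_const_nhds.congr' ?_
  filter_upwards [hlower.eventually_ge_atTop K] with n hn
  refine (mul_eq_zero_of_right _ <| Finset.sum_eq_zero fun k hk =>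
    Finset.sum_eq_zero fun j hj => ?_).symm
  obtain ⟨hk, -⟩ := Finset.mem_Icc.mp hk
  obtain ⟨hj1, hjn⟩ := Finset.mem_Icc.mp hj
  have hnd : n ≤ dSeq α k := le_dSeq hα (Nat.lt_floor_add_one _ |>.le.trans (by exact_mod_cast hk))
  have hsmall := hK k (by omega)
  rw [if_neg (hsmall j (Finset.mem_Icc.mpr ⟨hj1, by omega⟩)).not_ge,
    if_neg (hsmall (j + dSeq α k) (Finset.mem_Icc.mpr ⟨by omega, by omega⟩)).not_ge, sub_zero]

/-- **Large truncations vanish almost surely.**  With `X̂_k(j) = X_k(j)·1[|X_k(j)| ≥ 2^(k²)]`,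
`n^{-1/α} ∑_{k=⌊(1/α-1/2)log₂ n⌋+1}^{⌊(1/α)log₂ n⌋} ∑_{j=1}^n (X̂_k(j) - X̂_k(j+d_k)) → 0`
`P`-almost surely as `n → ∞`. -/
theorem middle_scale_large_truncation_vanishes
    {Ω : Type*} [MeasurableSpace Ω] (P : Measure Ω) [IsProbabilityMeasure P]
    (α : ℝ) (hα : α ∈ Set.Ioo (0 : ℝ) 2)
    (X : ℕ → ℕ → Ω → ℝ)
    (hmeas : ∀ k j, Measurable (X k j))
    (hSaS : ∀ k, 1 ≤ k → ∀ j, 1 ≤ j → j ≤ 2 * dSeq α k →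
        IsSaS P α ((k : ℝ) ^ (-(1 / α))) (X k j))
    (hindep : iIndepFun
        (fun p : ℕ × ℕ =>
          if 1 ≤ p.1 ∧ 1 ≤ p.2 ∧ p.2 ≤ 2 * dSeq α p.1 then X p.1 p.2 else fun _ => 0) P) :
    ∀ᵐ ω ∂P, Tendsto (fun n : ℕ =>
        (n : ℝ) ^ (-(1 / α)) *
          ∑ k ∈ Finset.Icc (⌊(1 / α - 1 / 2) * Real.logb 2 n⌋₊ + 1)
              ⌊(1 / α) * Real.logb 2 n⌋₊,
            ∑ j ∈ Finset.Icc 1 n,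
              ((if (2 : ℝ) ^ (k ^ 2) ≤ |X k j ω| then X k j ω else 0)
                - (if (2 : ℝ) ^ (k ^ 2) ≤ |X k (j + dSeq α k) ω|
                    then X k (j + dSeq α k) ω else 0)))
      atTop (𝓝 0) :=
  middle_scale_large_truncation_vanishes_general P α hα X hmeas hSaS
end

section
/- Let α ∈ (0,2). There exists a constant c = c(α) > 0 such that for all K ≥ 1 and all σ with 0 < σ ≤ 1, if X is an SαS(σ) random variable, then Var( X·1[|X| ≤ K] ) ≤ c · K^{2−α} · σ^{α}. -/
/-!
Truncation at `K` is controlled by the characteristic function at `1 / K`: on `|x| ≤ K` the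
argument `x / K` lies in `[-π, π]`, where `1 - cos t ≥ (2 / π²) t²`, so
`E[(X 1[|X| ≤ K])²] ≤ (π² / 2) K² E[1 - cos (X / K)] = (π² / 2) K² (1 - exp (-σ^α K^(-α)))`,
and `1 - exp (-y) ≤ y`.
-/

open MeasureTheory ProbabilityTheory Filter Topology

open Real

lemma sq_ite_abs_le_mul_one_sub_cos {K : ℝ} (hK : 0 < K) (x : ℝ) :
    (if |x| ≤ K then x else 0) ^ 2 ≤ π ^ 2 / 2 * K ^ 2 * (1 - cos (K⁻¹ * x)) := by
  split_ifs with hx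
  · have hxK : |K⁻¹ * x| ≤ π := by
      rw [abs_mul, abs_inv, abs_of_pos hK, inv_mul_le_iff₀ hK]
      nlinarith [pi_gt_three]
    have hcos := cos_le_one_sub_mul_cos_sq hxK
    have hKx : K * (K⁻¹ * x) = x := by field_simp
    calc x ^ 2 = π ^ 2 / 2 * K ^ 2 * (2 / π ^ 2 * (K⁻¹ * x) ^ 2) := by
          rw [← hKx]; field_simp
      _ ≤ π ^ 2 / 2 * K ^ 2 * (1 - cos (K⁻¹ * x)) := by gcongr; linarith
  · rw [zero_pow two_ne_zero]
    exact mul_nonneg (by positivity) (sub_nonneg.2 (cos_le_one _))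

lemma Measurable.ite_abs_le {Ω : Type*} [MeasurableSpace Ω] {X : Ω → ℝ} (hX : Measurable X)
    (K : ℝ) : Measurable fun ω => if |X ω| ≤ K then X ω else 0 :=
  .ite (measurableSet_le hX.abs measurable_const) hX measurable_const

lemma integral_sq_ite_abs_le_mul_one_sub_integral_cos {Ω : Type*} [MeasurableSpace Ω]
    {P : Measure Ω} [IsProbabilityMeasure P] {X : Ω → ℝ} (hX : Measurable X)
    {K : ℝ} (hK : 0 < K) :
    ∫ ω, (if |X ω| ≤ K then X ω else 0) ^ 2 ∂P
      ≤ π ^ 2 / 2 * K ^ 2 * (1 - ∫ ω, cos (K⁻¹ * X ω) ∂P) := by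
  have hcos : Integrable (fun ω => cos (K⁻¹ * X ω)) P :=
    .of_bound (by fun_prop) 1 (.of_forall fun ω => abs_cos_le_one _)
  have hsq : Integrable (fun ω => (if |X ω| ≤ K then X ω else 0) ^ 2) P := by
    refine .of_bound ((hX.ite_abs_le K).pow_const 2).aestronglyMeasurable (K ^ 2)
      (.of_forall fun ω => ?_)
    split_ifs with h
    · rw [norm_pow, Real.norm_eq_abs]; gcongr
    · simp [sq_nonneg]
  have hone_sub : 1 - ∫ ω, cos (K⁻¹ * X ω) ∂P = ∫ ω, (1 - cos (K⁻¹ * X ω)) ∂P := by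
    rw [integral_sub (integrable_const 1) hcos, integral_const, probReal_univ, one_smul]
  rw [hone_sub, ← integral_const_mul]
  exact integral_mono hsq ((integrable_const 1).sub hcos |>.const_mul _)
    fun ω => sq_ite_abs_le_mul_one_sub_cos hK (X ω)

lemma IsSaS.integral_cos_mul {Ω : Type*} [MeasurableSpace Ω] {P : Measure Ω} {α σ : ℝ}
    {X : Ω → ℝ} (h : IsSaS P α σ X) (θ : ℝ) :
    ∫ ω, cos (θ * X ω) ∂P = exp (-(σ ^ α * |θ| ^ α)) := by
  -- integrable because its integral does not vanish
  have hint : Integrable (fun ω => Complex.exp ((θ * X ω : ℝ) * Complex.I)) P := by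
    by_contra hint
    exact Complex.exp_ne_zero _ ((h θ).symm.trans (integral_undef hint))
  have hre := congrArg Complex.re (h θ)
  rw [← RCLike.re_to_complex, ← integral_re hint, Complex.exp_ofReal_re] at hre
  simpa only [RCLike.re_to_complex, Complex.exp_ofReal_mul_I_re] using hre

theorem sas_truncated_variance_bound_general (α : ℝ) :
    ∃ c : ℝ, 0 < c ∧
      ∀ (Ω : Type) [MeasurableSpace Ω] (P : Measure Ω) [IsProbabilityMeasure P]
        (K σ : ℝ), 1 ≤ K → 0 < σ → σ ≤ 1 →
        ∀ X : Ω → ℝ, Measurable X → IsSaS P α σ X →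
          variance (fun ω => if |X ω| ≤ K then X ω else 0) P ≤ c * K ^ (2 - α) * σ ^ α := by
  refine ⟨π ^ 2 / 2, by positivity, fun Ω _ P _ K σ hK _ _ X hX hSaS => ?_⟩
  have hK0 : 0 < K := one_pos.trans_le hK
  calc variance (fun ω => if |X ω| ≤ K then X ω else 0) P
      ≤ ∫ ω, (if |X ω| ≤ K then X ω else 0) ^ 2 ∂P :=
        variance_le_expectation_sq (hX.ite_abs_le K).aestronglyMeasurable
    _ ≤ π ^ 2 / 2 * K ^ 2 * (1 - ∫ ω, cos (K⁻¹ * X ω) ∂P) :=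
        integral_sq_ite_abs_le_mul_one_sub_integral_cos hX hK0
    _ = π ^ 2 / 2 * K ^ 2 * (1 - exp (-(σ ^ α * K ^ (-α)))) := by
        rw [hSaS.integral_cos_mul, abs_inv, abs_of_pos hK0, inv_rpow hK0.le, rpow_neg hK0.le]
    _ ≤ π ^ 2 / 2 * K ^ 2 * (σ ^ α * K ^ (-α)) := by
        gcongr; linarith [one_sub_le_exp_neg (σ ^ α * K ^ (-α))]
    _ = π ^ 2 / 2 * K ^ (2 - α) * σ ^ α := by
        rw [sub_eq_add_neg, rpow_add hK0, rpow_two]; ring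

/-- **Variance of a truncated symmetric stable variable.**  For `α ∈ (0,2)` there is
`c = c(α) > 0` such that for all `K ≥ 1`, `0 < σ ≤ 1` and `X` an `SαS(σ)` random variable,
`Var(X · 1[|X| ≤ K]) ≤ c · K^(2-α) · σ^α`. -/
theorem sas_truncated_variance_bound (α : ℝ) (hα : α ∈ Set.Ioo (0 : ℝ) 2) :
    ∃ c : ℝ, 0 < c ∧
      ∀ (Ω : Type) [MeasurableSpace Ω] (P : Measure Ω) [IsProbabilityMeasure P]
        (K σ : ℝ), 1 ≤ K → 0 < σ → σ ≤ 1 →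
        ∀ X : Ω → ℝ, Measurable X → IsSaS P α σ X →
          variance (fun ω => if |X ω| ≤ K then X ω else 0) P ≤ c * K ^ (2 - α) * σ ^ α :=
  sas_truncated_variance_bound_general α
end
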